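/- arXiv:2205.08797 — 4 statements merged into one kernel-verified Lean document; each statement's English description precedes it below -/
import Mathlib

section
/- The Cartan invariant of any triple of pairwise non-proportional null vectors for a Hermitian form of signature (2,1) lies in the closed interval [−π/2, π/2]. -/
open Matrix Complex

noncomputable section

abbrev C3 := Fin 3 → ℂ

/-- Hermitian form ⟨X,Y⟩ = Yᴴ J X. -/
def herm (J : Matrix (Fin 3) (Fin 3) ℂ) (X Y : C3) : ℂ :=
  star Y ⬝ᵥ J.mulVec X

/-- Box product a ⊠ b = conj(J⁻¹ (a × b)). -/
def box (J : Matrix (Fin 3) (Fin 3) ℂ) (a b : C3) : C3 :=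
  star (J⁻¹.mulVec (crossProduct a b))

def J3 : Matrix (Fin 3) (Fin 3) ℂ := !![1,0,0;0,1,0;0,0,-1]

def HS : Matrix (Fin 3) (Fin 3) ℂ := !![0,0,1;0,2,0;1,0,0]

def cartan (J : Matrix (Fin 3) (Fin 3) ℂ) (p q r : C3) : ℝ :=
  (-(herm J p q * herm J q r * herm J r p)).arg

def heisPt (z : ℂ) (t : ℝ) : C3 := ![(-(Complex.normSq z) : ℝ) + (t : ℂ) * Complex.I, z, 1]

def realVec (v : Fin 3 → ℝ) : C3 := fun i => (v i : ℂ)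

/-! The Gram matrix of `p, q, r` is `Mᴴ J M`, where `M` has columns `p, q, r`, so its determinant
is `det J · |det M|² = -|det M|²`. When `p, q, r` are null its diagonal vanishes and the
determinant expands to `2 Re(⟨p,q⟩⟨q,r⟩⟨r,p⟩)`. -/

lemma herm_swap {J : Matrix (Fin 3) (Fin 3) ℂ} (hJ : J.IsHermitian) (X Y : C3) :
    herm J Y X = star (herm J X Y) := by
  rw [herm, herm, star_dotProduct, star_mulVec, hJ.eq, ← dotProduct_mulVec]

lemma conjTranspose_mul_mul_apply (J : Matrix (Fin 3) (Fin 3) ℂ) (v : Fin 3 → C3)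
    (i j : Fin 3) :
    ((of v)ᵀᴴ * J * (of v)ᵀ) i j = herm J (v j) (v i) := by
  rw [Matrix.mul_assoc, mul_apply, herm, dotProduct]
  rfl

lemma two_mul_re_herm_triple {J : Matrix (Fin 3) (Fin 3) ℂ} (hJ : J.IsHermitian) {p q r : C3}
    (hpp : herm J p p = 0) (hqq : herm J q q = 0) (hrr : herm J r r = 0) :
    ((2 * (herm J p q * herm J q r * herm J r p).re : ℝ) : ℂ) =
      star (of ![p, q, r]).det * J.det * (of ![p, q, r]).det := by
  set M := (of ![p, q, r])ᵀ
  have hgram : (Mᴴ * J * M).det = star (of ![p, q, r]).det * J.det * (of ![p, q, r]).det := by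
    rw [det_mul, det_mul, det_conjTranspose, det_transpose]
  rw [← add_conj, ← hgram, det_fin_three]
  simp only [M, conjTranspose_mul_mul_apply, Fin.isValue, cons_val_zero, cons_val_one, cons_val,
    hpp, hqq, hrr, mul_zero, zero_mul, sub_self, zero_add, sub_zero]
  rw [herm_swap hJ p q, herm_swap hJ q r, herm_swap hJ r p, star_def]
  simp only [map_mul]
  ring

lemma isHermitian_J3 : J3.IsHermitian := by
  ext i j
  fin_cases i <;> fin_cases j <;> simp [J3]

lemma det_J3 : J3.det = -1 := by
  simp [J3, det_fin_three]

lemma re_neg_herm_triple_nonneg {p q r : C3}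
    (hpp : herm J3 p p = 0) (hqq : herm J3 q q = 0) (hrr : herm J3 r r = 0) :
    0 ≤ (-(herm J3 p q * herm J3 q r * herm J3 r p)).re := by
  have h := two_mul_re_herm_triple isHermitian_J3 hpp hqq hrr
  rw [det_J3, star_def, mul_neg_one, neg_mul, ← normSq_eq_conj_mul_self, ← ofReal_neg,
    ofReal_inj] at h
  rw [neg_re]
  linarith [normSq_nonneg (of ![p, q, r]).det]

theorem stmt6_general (p q r : C3)
    (hpp : herm J3 p p = 0) (hqq : herm J3 q q = 0) (hrr : herm J3 r r = 0) :
    0 ≤ (-(herm J3 p q * herm J3 q r * herm J3 r p)).re ∧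
      cartan J3 p q r ∈ Set.Icc (-(Real.pi / 2)) (Real.pi / 2) := by
  have h := re_neg_herm_triple_nonneg hpp hqq hrr
  exact ⟨h, abs_le.mp (abs_arg_le_pi_div_two_iff.mpr h)⟩

/-- The Cartan invariant of a triple of pairwise non-proportional null vectors lies in
[−π/2, π/2]; equivalently the real part of −⟨p,q⟩⟨q,r⟩⟨r,p⟩ is nonnegative. -/
theorem stmt6 (p q r : C3) (hp : p ≠ 0) (hq : q ≠ 0) (hr : r ≠ 0)
    (hpp : herm J3 p p = 0) (hqq : herm J3 q q = 0) (hrr : herm J3 r r = 0)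
    (hpq : ¬ ∃ l : ℂ, q = l • p) (hqr : ¬ ∃ l : ℂ, r = l • q) (hrp : ¬ ∃ l : ℂ, p = l • r) :
    0 ≤ (-(herm J3 p q * herm J3 q r * herm J3 r p)).re ∧
      cartan J3 p q r ∈ Set.Icc (-(Real.pi / 2)) (Real.pi / 2) :=
  stmt6_general p q r hpp hqq hrr
end
end

section
/- In the Siegel model, the Cartan invariant of the triple (∞, o, p), where ∞ = [1,0,0]ᵀ, o = [0,0,1]ᵀ, and p is the null vector with Heisenberg coordinates [z,t] (lift p = [−|z|² + it, z, 1]ᵀ, z ≠ 0), satisfies |𝔸(∞, o, p)| ≤ α if and only if |t| ≤ tan(α) |z|², for any 0 ≤ α < π/2. -/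
open Matrix Complex

noncomputable section

/-- In the Siegel model, |𝔸(∞, o, [z,t])| ≤ α iff |t| ≤ tan(α)|z|². -/
theorem stmt9 (α : ℝ) (hα0 : 0 ≤ α) (hα : α < Real.pi / 2) (z : ℂ) (hz : z ≠ 0) (t : ℝ) :
    |cartan HS ![1, 0, 0] ![0, 0, 1] (heisPt z t)| ≤ α ↔
      |t| ≤ Real.tan α * Complex.normSq z := by
  have hn : 0 < Complex.normSq z := Complex.normSq_pos.mpr hz
  set n : ℝ := Complex.normSq z with hn'
  -- Step 1: the Cartan invariant equals arg(n + t·I)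
  have hval : -(herm HS ![1,0,0] ![0,0,1] * herm HS ![0,0,1] (heisPt z t)
      * herm HS (heisPt z t) ![1,0,0]) = (n : ℂ) + t * Complex.I := by
    simp [herm, HS, heisPt, Matrix.mulVec, dotProduct, Fin.sum_univ_three]
    ring
  have hcar : cartan HS ![1, 0, 0] ![0, 0, 1] (heisPt z t)
      = Complex.arg ((n : ℂ) + t * Complex.I) := by
    rw [cartan, hval]
  -- Step 2: arg(n + t·I) = arctan (t / n)
  set w : ℂ := (n : ℂ) + t * Complex.I with hw
  have hre : w.re = n := by simp [hw]
  have him : w.im = t := by simp [hw]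
  have habslt : |Complex.arg w| < Real.pi / 2 :=
    Complex.abs_arg_lt_pi_div_two_iff.mpr (Or.inl (by rw [hre]; exact hn))
  rw [abs_lt] at habslt
  have harg : Complex.arg w = Real.arctan (t / n) := by
    rw [← Real.arctan_tan habslt.1 habslt.2, Complex.tan_arg, hre, him]
  rw [hcar, harg]
  -- Step 3: |arctan τ| ≤ α ↔ |τ| ≤ tan α
  set τ : ℝ := t / n with hτ
  have hnn : ∀ x : ℝ, 0 ≤ x → 0 ≤ Real.arctan x := fun x hx => by
    simpa using Real.arctan_strictMono.monotone hx
  have habs : |Real.arctan τ| = Real.arctan |τ| := by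
    rcases abs_cases τ with ⟨h1,h2⟩ | ⟨h1,h2⟩
    · rw [h1, _root_.abs_of_nonneg (hnn _ h2)]
    · rw [h1, _root_.abs_of_nonpos, ← Real.arctan_neg]
      linarith [hnn (-τ) (by linarith : (0:ℝ) ≤ -τ), Real.arctan_neg τ]
  rw [habs]
  have hpi := Real.pi_pos
  have key : Real.arctan |τ| ≤ α ↔ |τ| ≤ Real.tan α := by
    constructor
    · intro h
      have := Real.strictMonoOn_tan.monotoneOn
        ⟨Real.neg_pi_div_two_lt_arctan _, Real.arctan_lt_pi_div_two _⟩
        ⟨by linarith, hα⟩ h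
      simpa [Real.tan_arctan] using this
    · intro h
      calc Real.arctan |τ| ≤ Real.arctan (Real.tan α) := Real.arctan_strictMono.monotone h
        _ = α := Real.arctan_tan (by linarith) hα
  rw [key, hτ, abs_div, _root_.abs_of_pos hn, div_le_iff₀ hn]
end
end

section
/- Three pairwise distinct null lines in ℂP² lie on a common complex projective line (i.e. the corresponding points of S³ lie on a common ℂ-circle) if and only if the Cartan invariant of the triple equals ±π/2, i.e. the triple product ⟨p,q⟩⟨q,r⟩⟨r,p⟩ is purely imaginary and nonzero. -/
open Matrix Complex

noncomputable section

lemma herm_apply (X Y : C3) :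
    herm J3 X Y = (starRingEnd ℂ) (Y 0) * X 0 + (starRingEnd ℂ) (Y 1) * X 1
      - (starRingEnd ℂ) (Y 2) * X 2 := by
  simp [herm, J3, dotProduct, mulVec, Fin.sum_univ_three, Matrix.cons_val_zero,
    Matrix.cons_val_one, Pi.star_apply, vecHead, vecTail]
  ring

/-- If two nonzero null vectors are orthogonal, they are proportional. -/
lemma prop_of_herm_zero (p q : C3) (hp : p ≠ 0)
    (hpp : herm J3 p p = 0) (hqq : herm J3 q q = 0) (h : herm J3 p q = 0) :
    ∃ l : ℂ, q = l • p := by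
  rw [herm_apply] at hpp hqq h
  set a := p 0; set b := p 1; set c := p 2
  set d := q 0; set e := q 1; set f := q 2
  have hc : c ≠ 0 := by
    intro hc0
    refine hp ?_
    rw [hc0] at hpp
    have : ((normSq a : ℂ)) + (normSq b : ℂ) = 0 := by
      rw [normSq_eq_conj_mul_self, normSq_eq_conj_mul_self]; linear_combination hpp
    have h2 : normSq a + normSq b = 0 := by exact_mod_cast this
    have ha : a = 0 := normSq_eq_zero.mp (by nlinarith [normSq_nonneg a, normSq_nonneg b])
    have hb : b = 0 := normSq_eq_zero.mp (by nlinarith [normSq_nonneg a, normSq_nonneg b])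
    funext i
    fin_cases i
    · exact ha
    · exact hb
    · exact hc0
  have hconj : (starRingEnd ℂ) d * a + (starRingEnd ℂ) e * b - (starRingEnd ℂ) f * c = 0 := h
  have hconj' : d * (starRingEnd ℂ) a + e * (starRingEnd ℂ) b - f * (starRingEnd ℂ) c = 0 := by
    have := congrArg (starRingEnd ℂ) hconj
    simpa [map_add, map_sub, _root_.map_mul] using this
  have key : (c * d - f * a) * (starRingEnd ℂ) (c * d - f * a)
      + (c * e - f * b) * (starRingEnd ℂ) (c * e - f * b) = 0 := by
    simp only [map_sub, _root_.map_mul]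
    linear_combination (c * (starRingEnd ℂ) c) * hqq + (f * (starRingEnd ℂ) f) * hpp
      - (c * (starRingEnd ℂ) f) * hconj' - ((starRingEnd ℂ) c * f) * hconj
  rw [mul_conj, mul_conj] at key
  have key' : normSq (c * d - f * a) + normSq (c * e - f * b) = 0 := by exact_mod_cast key
  have h1 : c * d - f * a = 0 := normSq_eq_zero.mp
    (by nlinarith [normSq_nonneg (c * d - f * a), normSq_nonneg (c * e - f * b)])
  have h2 : c * e - f * b = 0 := normSq_eq_zero.mp
    (by nlinarith [normSq_nonneg (c * d - f * a), normSq_nonneg (c * e - f * b)])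
  refine ⟨f / c, ?_⟩
  funext i; fin_cases i <;> simp only [Pi.smul_apply, smul_eq_mul]
  · show d = f / c * a; field_simp; linear_combination h1
  · show e = f / c * b; field_simp; linear_combination h2
  · show f = f / c * c; field_simp

lemma det_identity (p q r : C3)
    (hpp : herm J3 p p = 0) (hqq : herm J3 q q = 0) (hrr : herm J3 r r = 0) :
    herm J3 p q * herm J3 q r * herm J3 r p
      + (starRingEnd ℂ) (herm J3 p q * herm J3 q r * herm J3 r p)
    = -((Matrix.of ![p, q, r]).det * (starRingEnd ℂ) (Matrix.of ![p, q, r]).det) := by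
  rw [Matrix.det_fin_three]
  simp only [herm_apply, Matrix.of_apply, Matrix.cons_val', Matrix.cons_val_zero,
    Matrix.cons_val_one, Matrix.head_cons, Matrix.head_fin_const, Matrix.empty_val',
    Matrix.cons_val_fin_one, Matrix.cons_val_two, Matrix.tail_cons, _root_.map_mul, map_add, map_sub, Complex.conj_conj] at *
  set a := p 0; set b := p 1; set c := p 2
  set d := q 0; set e := q 1; set f := q 2
  set g := r 0; set h := r 1; set i := r 2
  set a' := (starRingEnd ℂ) a; set b' := (starRingEnd ℂ) b; set c' := (starRingEnd ℂ) c
  set d' := (starRingEnd ℂ) d; set e' := (starRingEnd ℂ) e; set f' := (starRingEnd ℂ) f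
  set g' := (starRingEnd ℂ) g; set h' := (starRingEnd ℂ) h; set i' := (starRingEnd ℂ) i
  linear_combination
    (-((d'*d+e'*e-f'*f)*(g'*g+h'*h-i'*i) - (d'*g+e'*h-f'*i)*(g'*d+h'*e-i'*f))) * hpp
    + ((a'*g+b'*h-c'*i)*(g'*a+h'*b-i'*c)) * hqq
    + ((a'*d+b'*e-c'*f)*(d'*a+e'*b-f'*c)) * hrr

/-- Three pairwise non-proportional null vectors lie on a common complex projective line
(i.e. are linearly dependent over ℂ) iff the Cartan invariant of the triple is ±π/2,
i.e. the triple product ⟨p,q⟩⟨q,r⟩⟨r,p⟩ is purely imaginary and nonzero. -/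
theorem stmt11 (p q r : C3) (hp : p ≠ 0) (hq : q ≠ 0) (hr : r ≠ 0)
    (hpp : herm J3 p p = 0) (hqq : herm J3 q q = 0) (hrr : herm J3 r r = 0)
    (hpq : ¬ ∃ l : ℂ, q = l • p) (hqr : ¬ ∃ l : ℂ, r = l • q) (hrp : ¬ ∃ l : ℂ, p = l • r) :
    |cartan J3 p q r| = Real.pi / 2 ↔ ¬ LinearIndependent ℂ ![p, q, r] := by
  have h1 : herm J3 p q ≠ 0 := fun h0 => hpq (prop_of_herm_zero p q hp hpp hqq h0)
  have h2 : herm J3 q r ≠ 0 := fun h0 => hqr (prop_of_herm_zero q r hq hqq hrr h0)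
  have h3 : herm J3 r p ≠ 0 := fun h0 => hrp (prop_of_herm_zero r p hr hrr hpp h0)
  set T := herm J3 p q * herm J3 q r * herm J3 r p with hTdef
  have hT : T ≠ 0 := mul_ne_zero (mul_ne_zero h1 h2) h3
  set M := Matrix.of ![p, q, r] with hMdef
  have hkey : 2 * T.re = -normSq M.det := by
    have := det_identity p q r hpp hqq hrr
    rw [Complex.add_conj, Complex.mul_conj] at this
    exact_mod_cast this
  have hre : T.re = 0 ↔ M.det = 0 := by
    constructor
    · intro h
      exact normSq_eq_zero.mp (by rw [h] at hkey; linarith)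
    · intro h
      rw [h] at hkey; simp at hkey; linarith
  have hLI : ¬ LinearIndependent ℂ ![p, q, r] ↔ M.det = 0 := by
    rw [show LinearIndependent ℂ ![p, q, r] ↔ IsUnit M from
        Matrix.linearIndependent_rows_iff_isUnit,
      Matrix.isUnit_iff_isUnit_det, isUnit_iff_ne_zero, not_not]
  have hc : cartan J3 p q r = (-T).arg := rfl
  rw [hLI, hc, ← hre]
  have hpi : (0:ℝ) < Real.pi / 2 := by positivity
  constructor
  · intro habs
    rcases (abs_eq hpi.le).mp habs with h | h
    · have := (Complex.arg_eq_pi_div_two_iff.mp h).1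
      simpa using this
    · have := (Complex.arg_eq_neg_pi_div_two_iff.mp h).1
      simpa using this
  · intro hTre
    have hre' : (-T).re = 0 := by simp [hTre]
    have him : (-T).im ≠ 0 := by
      intro h0
      exact hT (neg_eq_zero.mp (Complex.ext hre' h0))
    rcases him.lt_or_gt with hlt | hlt
    · rw [Complex.arg_eq_neg_pi_div_two_iff.mpr ⟨hre', hlt⟩]
      rw [abs_neg, abs_of_pos hpi]
    · rw [Complex.arg_eq_pi_div_two_iff.mpr ⟨hre', hlt⟩]
      rw [abs_of_pos hpi]
end
end

section
/- In Heisenberg coordinates, for two points q = [x, 0] and r = [y e^{iθ}, 0] with x, y > 0 and 0 < θ < 2π, the Cartan invariant of (q, r, 0), where 0 = [0,0], equals arg(1 − sin(2t) e^{−iθ}) where t = arg(x + i y) ∈ (0, π/2); moreover 0 < 𝔸(q, r, 0) ≤ (π − θ)/2 when 0 < θ < π, with the maximum attained at x = y. -/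
open Matrix Complex

noncomputable section

/-!
The three Hermitian products are ⟨q,r⟩ = -(x² + y² - 2xy e^{-iθ}), ⟨r,o⟩ = -y² and ⟨o,q⟩ = -x²,
so -⟨q,r⟩⟨r,o⟩⟨o,q⟩ is a positive multiple of 1 - s e^{-iθ} with s = 2xy/(x² + y²) = sin 2t ∈ (0,1].
This point has positive real part 1 - s cos θ, so its argument is arctan (s sin θ / (1 - s cos θ)),
which increases with s; at s = 1 the polar form 1 - e^{-iθ} = 2 sin(θ/2) e^{i(π-θ)/2} gives the
maximum (π - θ)/2.
-/

open scoped Real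

lemma herm_HS_apply (X Y : C3) :
    herm HS X Y = X 0 * star (Y 2) + 2 * X 1 * star (Y 1) + X 2 * star (Y 0) := by
  simp [herm, HS, Matrix.mulVec, dotProduct, Fin.sum_univ_three]
  ring

lemma neg_herm_triple_heisenberg (x y θ : ℝ) :
    -(herm HS ![-(x : ℂ) ^ 2, x, 1] ![-(y : ℂ) ^ 2, y * exp (θ * I), 1]
        * herm HS ![-(y : ℂ) ^ 2, y * exp (θ * I), 1] ![0, 0, 1]
        * herm HS ![0, 0, 1] ![-(x : ℂ) ^ 2, x, 1])
      = x ^ 2 * y ^ 2 * (x ^ 2 + y ^ 2 - 2 * x * y * exp (-θ * I)) := by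
  simp only [herm_HS_apply]
  simp [← exp_conj, conj_ofReal]
  ring

lemma cartan_heisenberg (θ : ℝ) {x y : ℝ} (hx : x ≠ 0) (hy : y ≠ 0) :
    cartan HS ![-(x : ℂ) ^ 2, x, 1] ![-(y : ℂ) ^ 2, y * exp (θ * I), 1] ![0, 0, 1]
      = arg (1 - ((2 * x * y / (x ^ 2 + y ^ 2) : ℝ) : ℂ) * exp (-θ * I)) := by
  have hpos : 0 < x ^ 2 + y ^ 2 := by positivity
  have hscale : ((x ^ 2 * y ^ 2 * (x ^ 2 + y ^ 2) : ℝ) : ℂ)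
        * (1 - ((2 * x * y / (x ^ 2 + y ^ 2) : ℝ) : ℂ) * exp (-θ * I))
      = x ^ 2 * y ^ 2 * (x ^ 2 + y ^ 2 - 2 * x * y * exp (-θ * I)) := by
    have : ((x : ℂ) ^ 2 + y ^ 2) ≠ 0 := by exact_mod_cast hpos.ne'
    push_cast
    field_simp
  rw [cartan, neg_herm_triple_heisenberg, ← hscale, arg_real_mul _ (by positivity)]

lemma Complex.sin_two_mul_arg (z : ℂ) : Real.sin (2 * arg z) = 2 * z.re * z.im / normSq z := by
  rcases eq_or_ne z 0 with rfl | hz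
  · simp
  rw [Real.sin_two_mul, sin_arg, cos_arg hz, normSq_eq_norm_sq]
  field_simp

lemma two_mul_div_sq_add_sq_le_one (x y : ℝ) : 2 * x * y / (x ^ 2 + y ^ 2) ≤ 1 :=
  div_le_one_of_le₀ (by nlinarith [sq_nonneg (x - y)]) (by positivity)

lemma arg_eq_arctan_of_re_pos {z : ℂ} (hz : 0 < z.re) : arg z = Real.arctan (z.im / z.re) := by
  have h := abs_lt.mp (abs_arg_lt_pi_div_two_iff.mpr (Or.inl hz))
  rw [← tan_arg, Real.arctan_tan h.1 h.2]

lemma one_sub_mul_exp_neg_mul_I (s θ : ℝ) :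
    1 - (s : ℂ) * exp (-θ * I) = ⟨1 - s * Real.cos θ, s * Real.sin θ⟩ := by
  apply Complex.ext <;> simp [exp_re, exp_im, ← ofReal_neg, Real.cos_neg, Real.sin_neg]

lemma arg_one_sub_mul_exp_neg_mul_I {s θ : ℝ} (hs0 : 0 ≤ s) (hs1 : s ≤ 1) (hθ : Real.cos θ < 1) :
    arg (1 - (s : ℂ) * exp (-θ * I)) = Real.arctan (s * Real.sin θ / (1 - s * Real.cos θ)) := by
  rw [one_sub_mul_exp_neg_mul_I, arg_eq_arctan_of_re_pos]
  show 0 < 1 - s * Real.cos θ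
  nlinarith [Real.neg_one_le_cos θ]

lemma arg_one_sub_exp_neg_mul_I {θ : ℝ} (hθ0 : 0 < θ) (hθ : θ < 2 * π) :
    arg (1 - exp (-θ * I)) = (π - θ) / 2 := by
  have hsin_half : 0 < Real.sin (θ / 2) :=
    Real.sin_pos_of_pos_of_lt_pi (by linarith) (by linarith)
  have hpolar : 1 - exp (-θ * I) = ((2 * Real.sin (θ / 2) : ℝ) : ℂ)
      * (cos ((π - θ) / 2 : ℝ) + sin ((π - θ) / 2 : ℝ) * I) := by
    have h := one_sub_mul_exp_neg_mul_I 1 θ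
    rw [ofReal_one, one_mul] at h
    rw [h, ← ofReal_cos, ← ofReal_sin, sub_div, Real.cos_pi_div_two_sub, Real.sin_pi_div_two_sub]
    have hcos : Real.cos θ = 1 - 2 * Real.sin (θ / 2) ^ 2 := by
      have h2 := Real.cos_two_mul' (θ / 2)
      rw [mul_div_cancel₀ θ two_ne_zero] at h2
      linarith [Real.sin_sq_add_cos_sq (θ / 2)]
    have hsin : Real.sin θ = 2 * Real.sin (θ / 2) * Real.cos (θ / 2) := by
      rw [← Real.sin_two_mul, mul_div_cancel₀ θ two_ne_zero]
    apply Complex.ext <;>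
      simp only [mul_re, mul_im, add_re, add_im, ofReal_re, ofReal_im, I_re, I_im, hcos, hsin] <;>
      ring
  rw [hpolar, arg_mul_cos_add_sin_mul_I (by positivity) ⟨by linarith, by linarith⟩]

lemma arg_one_sub_mul_exp_neg_mul_I_le {s θ : ℝ} (hs0 : 0 ≤ s) (hs1 : s ≤ 1) (hθ0 : 0 < θ)
    (hθπ : θ ≤ π) :
    arg (1 - (s : ℂ) * exp (-θ * I)) ≤ (π - θ) / 2 := by
  have hcos : Real.cos θ < 1 := by
    simpa using Real.cos_lt_cos_of_nonneg_of_le_pi le_rfl hθπ hθ0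
  have hsin : 0 ≤ Real.sin θ := Real.sin_nonneg_of_nonneg_of_le_pi hθ0.le hθπ
  calc arg (1 - (s : ℂ) * exp (-θ * I))
      = Real.arctan (s * Real.sin θ / (1 - s * Real.cos θ)) :=
        arg_one_sub_mul_exp_neg_mul_I hs0 hs1 hcos
    _ ≤ Real.arctan (Real.sin θ / (1 - Real.cos θ)) := by
        rw [Real.arctan_le_arctan_iff, div_le_div_iff₀ (by nlinarith [Real.neg_one_le_cos θ])
          (by linarith)]
        nlinarith [mul_nonneg (sub_nonneg.mpr hs1) hsin]
    _ = arg (1 - exp (-θ * I)) := by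
        simpa using (arg_one_sub_mul_exp_neg_mul_I zero_le_one le_rfl hcos).symm
    _ = (π - θ) / 2 := arg_one_sub_exp_neg_mul_I hθ0 (by linarith [Real.pi_pos])

lemma arg_one_sub_mul_exp_neg_mul_I_pos {s θ : ℝ} (hs0 : 0 < s) (hs1 : s ≤ 1) (hθ0 : 0 < θ)
    (hθπ : θ < π) : 0 < arg (1 - (s : ℂ) * exp (-θ * I)) := by
  have hcos : Real.cos θ < 1 := by
    simpa using Real.cos_lt_cos_of_nonneg_of_le_pi le_rfl hθπ.le hθ0
  rw [arg_one_sub_mul_exp_neg_mul_I hs0.le hs1 hcos, Real.arctan_pos]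
  have := Real.sin_pos_of_pos_of_lt_pi hθ0 hθπ
  exact div_pos (by positivity) (by nlinarith [Real.neg_one_le_cos θ])

theorem stmt17_general (θ x y : ℝ) (hx : 0 < x) (hy : 0 < y) (hθ0 : 0 < θ)
    (q r o : C3)
    (hq : q = ![-(x : ℂ)^2, (x : ℂ), 1])
    (hr : r = ![-(y : ℂ)^2, (y : ℂ) * Complex.exp (θ * Complex.I), 1])
    (ho : o = ![0, 0, 1])
    (t : ℝ) (ht : t = Complex.arg (x + y * Complex.I)) :
    cartan HS q r o = Complex.arg (1 - (Real.sin (2 * t) : ℂ) * Complex.exp (-θ * Complex.I))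
      ∧ (θ < Real.pi →
          (0 < cartan HS q r o ∧ cartan HS q r o ≤ (Real.pi - θ) / 2 ∧
            (x = y → cartan HS q r o = (Real.pi - θ) / 2))) := by
  subst hq hr ho
  have hsin : Real.sin (2 * t) = 2 * x * y / (x ^ 2 + y ^ 2) := by
    rw [ht, Complex.sin_two_mul_arg, normSq_add_mul_I]
    simp
  have hcartan := cartan_heisenberg θ hx.ne' hy.ne'
  refine ⟨hsin ▸ hcartan, fun hθπ ↦ ?_⟩
  have hs1 := two_mul_div_sq_add_sq_le_one x y
  rw [hcartan]
  refine ⟨arg_one_sub_mul_exp_neg_mul_I_pos (by positivity) hs1 hθ0 hθπ,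
    arg_one_sub_mul_exp_neg_mul_I_le (by positivity) hs1 hθ0 hθπ.le, ?_⟩
  rintro rfl
  rw [show 2 * x * x / (x ^ 2 + x ^ 2) = 1 by field_simp; ring, ofReal_one, one_mul]
  exact arg_one_sub_exp_neg_mul_I hθ0 (by linarith [Real.pi_pos])

/-- For q = [x,0], r = [y e^{iθ},0] (x, y > 0, 0 < θ < 2π) and o = [0,0], the Cartan
invariant 𝔸(q,r,o) equals arg(1 − sin(2t) e^{−iθ}) where t = arg(x+iy) ∈ (0,π/2); moreover
for 0 < θ < π one has 0 < 𝔸(q,r,o) ≤ (π−θ)/2, with the maximum attained at x = y. -/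
theorem stmt17 (θ x y : ℝ) (hx : 0 < x) (hy : 0 < y) (hθ0 : 0 < θ) (hθ1 : θ < 2 * Real.pi)
    (q r o : C3)
    (hq : q = ![-(x : ℂ)^2, (x : ℂ), 1])
    (hr : r = ![-(y : ℂ)^2, (y : ℂ) * Complex.exp (θ * Complex.I), 1])
    (ho : o = ![0, 0, 1])
    (t : ℝ) (ht : t = Complex.arg (x + y * Complex.I)) :
    cartan HS q r o = Complex.arg (1 - (Real.sin (2 * t) : ℂ) * Complex.exp (-θ * Complex.I))
      ∧ (θ < Real.pi →
          (0 < cartan HS q r o ∧ cartan HS q r o ≤ (Real.pi - θ) / 2 ∧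
            (x = y → cartan HS q r o = (Real.pi - θ) / 2))) :=
  stmt17_general θ x y hx hy hθ0 q r o hq hr ho t ht
end
end
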